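/- C₀(C₁(C₂(C₃(C₄(C₅(1)))))) > ack 4 (ack 4 254) (the paper's computation C̃₀₆(1) > F₄(F₄(254)), giving the total number of critical points produced below ν in the irregular construction). -/

import Mathlib

def C0 (m : ℕ) : ℕ := 2 ^ m
def C1 (m : ℕ) : ℕ := 2 ^ m

def C2 : ℕ → ℕ
  | 0 => 0
  | m + 1 => C2 m + 2 ^ (C2 m)

def C3 (m : ℕ) : ℕ := 2 ^ m

def C4 : ℕ → ℕ
  | 0 => 0
  | 1 => 8
  | m + 2 => C4 (m + 1) + C1 (C2 (C3 (C4 (m + 1)))) - 1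

def C5 : ℕ → ℕ
  | 0 => 0
  | 1 => 2
  | m + 2 => C5 (m + 1) + C3 (C4 (C5 (m + 1)))

def C6 (m : ℕ) : ℕ := 2 ^ m

def C7 : ℕ → ℕ
  | 0 => 0
  | m + 1 => C7 m + C1 (C2 (C3 (C4 (C5 (C6 (C7 m)))))) - 8

def C8 (m : ℕ) : ℕ := 2 ^ m

def H (n : ℕ) : ℕ := C1 (C2 (C3 (C4 (C5 n))))
def G (n : ℕ) : ℕ := C1 (C2 (C3 (C4 (C5 (C6 (C7 (C8 n)))))))

def C9 : ℕ → ℕ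
  | 0 => 0
  | 1 => G (H 1 - 8) - 8
  | m + 2 => C9 (m + 1) + G (C9 (m + 1)) - H 1

def C10 : ℕ → ℕ
  | 0 => 0
  | m + 1 => C10 m + C3 (C4 (C5 (C6 (C7 (C8 (C9 (C10 m)))))))

def T : ℕ → ℕ
  | 0 => 1
  | n + 1 => 2 ^ T n

lemma T_succ (n : ℕ) : T (n + 1) = 2 ^ T n := rfl

lemma T_strictMono : StrictMono T :=
  strictMono_nat_of_lt_succ fun n => by rw [T_succ]; exact Nat.lt_two_pow_self

lemma C1_eq (n : ℕ) : C1 n = 2 ^ n := rfl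
lemma C3_eq (n : ℕ) : C3 n = 2 ^ n := rfl
lemma C0_eq (n : ℕ) : C0 n = 2 ^ n := rfl

lemma one_le_two_pow' (x : ℕ) : 1 ≤ 2 ^ x := Nat.one_le_two_pow

lemma pow_le_pow' {x y : ℕ} (h : x ≤ y) : 2 ^ x ≤ 2 ^ y :=
  Nat.pow_le_pow_right (by norm_num) h

lemma C2_ge (m : ℕ) : T m ≤ C2 (m + 1) := by
  induction m with
  | zero => simp [T, C2]
  | succ m ih =>
    calc T (m + 1) = 2 ^ T m := T_succ m
    _ ≤ 2 ^ C2 (m + 1) := Nat.pow_le_pow_right (by norm_num) ih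
    _ ≤ C2 (m + 1) + 2 ^ C2 (m + 1) := Nat.le_add_left _ _
    _ = C2 (m + 2) := rfl

lemma ack4 (n : ℕ) : ack 4 n + 3 = T (n + 3) := by
  induction n with
  | zero =>
    show ack 4 0 + 3 = T 3
    rw [show (4 : ℕ) = 3 + 1 from rfl, ack_succ_zero, ack_three]
    norm_num [show (3:ℕ) = 2+1 from rfl, show (2:ℕ) = 1+1 from rfl, T_succ, T]
  | succ n ih =>
    rw [show (4 : ℕ) = 3 + 1 from rfl, ack_succ_succ, ack_three]
    have h3 : (3 : ℕ) ≤ 2 ^ (ack (3 + 1) n + 3) := by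
      have h8 : (3 : ℕ) ≤ 2 ^ 3 := by norm_num
      exact h8.trans (Nat.pow_le_pow_right (by norm_num) (by omega))
    rw [Nat.sub_add_cancel h3]
    rw [show ack (3 + 1) n + 3 = T (n + 3) from ih, ← T_succ]

lemma C4_key (m : ℕ) : C4 (m + 2) = C4 (m + 1) + C1 (C2 (C3 (C4 (m + 1)))) - 1 :=
  rfl

lemma gen8 (x : ℕ) (hx : 1 ≤ x) : 8 + x - 1 = x + 7 := by omega

lemma C4_step1 : C4 2 = C4 1 + C1 (C2 (C3 (C4 1))) - 1 := by
  have h := C4_key 0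
  norm_num at h
  exact h

lemma C4_step2 : C4 2 = 8 + C1 (C2 (C3 8)) - 1 := by
  rw [C4_step1, show C4 1 = 8 from rfl]

lemma C4_step3 : C4 2 = 8 + C1 (C2 256) - 1 := by
  rw [C4_step2, show C3 8 = 256 by norm_num [C3_eq]]

lemma C4_step4 : C4 2 = 8 + 2 ^ C2 256 - 1 := by
  rw [C4_step3, C1_eq]

lemma C4_two : C4 2 = 2 ^ C2 256 + 7 := by
  rw [C4_step4, gen8 (2 ^ C2 256) (one_le_two_pow' (C2 256))]

lemma LHS_eq : C0 (C1 (C2 (C3 (C4 (C5 1))))) =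
    2 ^ 2 ^ C2 (2 ^ (2 ^ C2 256 + 7)) := by
  rw [show C5 1 = 2 from rfl, C4_two, C3_eq, C1_eq, C0_eq]

lemma master (A : ℕ) (hAge : T 255 ≤ A) :
    ack 4 (ack 4 254) < 2 ^ 2 ^ C2 (2 ^ (2 ^ A + 7)) := by
  have hR : ack 4 (ack 4 254) < T (T 257) := by
    have h1 := ack4 254
    have h2 := ack4 (ack 4 254)
    rw [show ack 4 254 + 3 = T 257 from h1] at h2
    omega
  have hNge : T 257 ≤ 2 ^ (2 ^ A + 7) := by
    have h1 : T 256 ≤ 2 ^ A + 7 := by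
      rw [show (256 : ℕ) = 255 + 1 from rfl, T_succ]
      exact le_trans (pow_le_pow' hAge) (by omega)
    calc T 257 = 2 ^ T 256 := by rw [show (257 : ℕ) = 256 + 1 from rfl, T_succ]
    _ ≤ 2 ^ (2 ^ A + 7) := pow_le_pow' h1
  set N := 2 ^ (2 ^ A + 7) with hN
  have hN1 : 1 ≤ N := one_le_two_pow' _
  have hC2N : T (N - 1) ≤ C2 N := by
    have := C2_ge (N - 1)
    rwa [Nat.sub_add_cancel hN1] at this
  have hLHS : T (N + 1) ≤ 2 ^ 2 ^ C2 N := by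
    calc T (N + 1) = 2 ^ T N := T_succ N
    _ = 2 ^ T ((N - 1) + 1) := by rw [Nat.sub_add_cancel hN1]
    _ = 2 ^ 2 ^ T (N - 1) := by rw [T_succ]
    _ ≤ 2 ^ 2 ^ C2 N := pow_le_pow' (pow_le_pow' hC2N)
  have hTT : T (T 257) ≤ T (N + 1) := T_strictMono.monotone (by omega)
  omega

theorem stmt_12 : C0 (C1 (C2 (C3 (C4 (C5 1))))) > ack 4 (ack 4 254) := by
  have hAge : T 255 ≤ C2 256 := C2_ge 255
  rw [gt_iff_lt, LHS_eq]
  exact master (C2 256) hAge
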